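/- Let f : ℝ³ → ℝ be three times continuously differentiable and let x₀ ∈ ℝ³ satisfy f(x₀) = 0 and ∇f(x₀) ≠ 0. Then there exist δ > 0 and C > 0 such that for all z₁, z₂ in the open ball of radius δ around x₀ with f(z₁) = f(z₂) = 0, one has ∇f((z₁ + z₂)/2) ≠ 0 and |⟨(z₁ − z₂)/2, n̂((z₁ + z₂)/2)⟩| ≤ C ‖(z₁ − z₂)/2‖³; that is, the relative vector of two nearby points on the level surface {f = 0} is tangent to the surface at their midpoint up to a cubic error. -/

import Mathlib

/-!
Put `m = (z₁ + z₂)/2` and `v = (z₁ - z₂)/2`, so that `z₁ = m + v` and `z₂ = m - v`. Along the line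
`t ↦ m + t v` the even parts of a function cancel in the central difference
`f(m + v) - f(m - v) - 2 f'(m) v`, which is therefore of third order: its derivative in `t` is the
second central difference of `f'`, which is `O(|t|² ‖v‖²)` as soon as `f''` is Lipschitz. On the
level surface the first two terms vanish, so `|f'(m) v| = O(‖v‖³)`, and near `x₀` the gradient is
bounded away from zero, so dividing by `‖∇f(m)‖` keeps the bound.
-/

/-- The unit normal field `n̂(x) = ∇f(x)/‖∇f(x)‖` of level surfaces of `f`. -/
noncomputable def nhat (f : EuclideanSpace ℝ (Fin 3) → ℝ)
    (x : EuclideanSpace ℝ (Fin 3)) : EuclideanSpace ℝ (Fin 3) :=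
  ‖gradient f x‖⁻¹ • gradient f x

open Metric Set Filter Topology InnerProductSpace

section CentralDifference

variable {E F : Type*} [NormedAddCommGroup E] [NormedSpace ℝ E]
  [NormedAddCommGroup F] [NormedSpace ℝ F]

theorem Convex.add_smul_mem_of_abs_le {s : Set E} (hs : Convex ℝ s) {m v : E}
    (hadd : m + v ∈ s) (hsub : m - v ∈ s) {t : ℝ} (ht : |t| ≤ 1) : m + t • v ∈ s := by
  obtain ⟨ht₁, ht₂⟩ := abs_le.mp ht
  convert hs hadd hsub (by linarith : (0 : ℝ) ≤ (1 + t) / 2) (by linarith : (0 : ℝ) ≤ (1 - t) / 2)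
    (by ring) using 1
  module

theorem Convex.sub_smul_mem_of_abs_le {s : Set E} (hs : Convex ℝ s) {m v : E}
    (hadd : m + v ∈ s) (hsub : m - v ∈ s) {t : ℝ} (ht : |t| ≤ 1) : m - t • v ∈ s := by
  simpa [sub_eq_add_neg] using hs.add_smul_mem_of_abs_le hadd hsub (t := -t) (by simpa using ht)

theorem hasDerivAt_comp_add_smul {g : E → F} {m v : E} {t : ℝ}
    (hg : DifferentiableAt ℝ g (m + t • v)) :
    HasDerivAt (fun u : ℝ ↦ g (m + u • v)) (fderiv ℝ g (m + t • v) v) t := by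
  refine hg.hasFDerivAt.comp_hasDerivAt t ?_
  simpa using ((hasDerivAt_id t).smul_const v).const_add m

theorem hasDerivAt_comp_sub_smul {g : E → F} {m v : E} {t : ℝ}
    (hg : DifferentiableAt ℝ g (m - t • v)) :
    HasDerivAt (fun u : ℝ ↦ g (m - u • v)) (-fderiv ℝ g (m - t • v) v) t := by
  simp only [sub_eq_add_neg, ← smul_neg, ← map_neg] at hg ⊢
  exact hasDerivAt_comp_add_smul hg

variable {s : Set E} {K : NNReal} {m v : E}

theorem norm_add_add_sub_two_smul_le {g : E → F} (hg : Differentiable ℝ g)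
    (hs : Convex ℝ s) (hK : LipschitzOnWith K (fderiv ℝ g) s) (hadd : m + v ∈ s) (hsub : m - v ∈ s) :
    ‖g (m + v) + g (m - v) - (2 : ℝ) • g m‖ ≤ 2 * K * ‖v‖ ^ 2 := by
  have hderiv : ∀ t ∈ Icc (0 : ℝ) 1,
      HasDerivWithinAt (fun u : ℝ ↦ g (m + u • v) + g (m - u • v) - (2 : ℝ) • g m)
        (fderiv ℝ g (m + t • v) v - fderiv ℝ g (m - t • v) v) (Icc 0 1) t := fun t _ ↦
    ((((hasDerivAt_comp_add_smul (hg (m + t • v))).add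
      (hasDerivAt_comp_sub_smul (hg (m - t • v)))).sub_const _).hasDerivWithinAt).congr_deriv
      (sub_eq_add_neg _ _).symm
  have hbound : ∀ t ∈ Ico (0 : ℝ) 1,
      ‖fderiv ℝ g (m + t • v) v - fderiv ℝ g (m - t • v) v‖ ≤ 2 * K * ‖v‖ ^ 2 := by
    intro t ht
    have ht' : |t| ≤ 1 := abs_le.mpr ⟨by linarith [ht.1], ht.2.le⟩
    have hmem_add := hs.add_smul_mem_of_abs_le hadd hsub ht'
    have hmem_sub := hs.sub_smul_mem_of_abs_le hadd hsub ht'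
    calc ‖fderiv ℝ g (m + t • v) v - fderiv ℝ g (m - t • v) v‖
        ≤ ‖fderiv ℝ g (m + t • v) - fderiv ℝ g (m - t • v)‖ * ‖v‖ :=
          (fderiv ℝ g (m + t • v) - fderiv ℝ g (m - t • v)).le_opNorm v
      _ ≤ K * ‖(m + t • v) - (m - t • v)‖ * ‖v‖ := by
          gcongr
          exact hK.norm_sub_le hmem_add hmem_sub
      _ = 2 * K * ‖v‖ ^ 2 * |t| := by
          rw [show (m + t • v) - (m - t • v) = (2 * t) • v by module, norm_smul, Real.norm_eq_abs,
            abs_mul, abs_two]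
          ring
      _ ≤ 2 * K * ‖v‖ ^ 2 := mul_le_of_le_one_right (by positivity) ht'
  simpa [two_smul] using norm_image_sub_le_of_norm_deriv_le_segment_01' hderiv hbound

theorem norm_sub_sub_two_smul_fderiv_le {f : E → F} (hf : ContDiff ℝ 2 f)
    (hs : Convex ℝ s) (hK : LipschitzOnWith K (fderiv ℝ (fderiv ℝ f)) s)
    (hadd : m + v ∈ s) (hsub : m - v ∈ s) :
    ‖f (m + v) - f (m - v) - (2 : ℝ) • fderiv ℝ f m v‖ ≤ 2 * K * ‖v‖ ^ 3 := by
  have hf₁ : Differentiable ℝ f := hf.differentiable (by norm_num)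
  have hf₂ : Differentiable ℝ (fderiv ℝ f) :=
    (hf.fderiv_right (m := 1) (by norm_num)).differentiable (by norm_num)
  have hderiv : ∀ t ∈ Icc (0 : ℝ) 1,
      HasDerivWithinAt (fun u : ℝ ↦ f (m + u • v) - f (m - u • v) - u • (2 : ℝ) • fderiv ℝ f m v)
        ((fderiv ℝ f (m + t • v) + fderiv ℝ f (m - t • v) - (2 : ℝ) • fderiv ℝ f m) v)
        (Icc 0 1) t := by
    intro t _
    have := ((hasDerivAt_comp_add_smul (hf₁ (m + t • v))).sub
      (hasDerivAt_comp_sub_smul (hf₁ (m - t • v)))).sub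
      ((hasDerivAt_id t).smul_const ((2 : ℝ) • fderiv ℝ f m v))
    refine this.hasDerivWithinAt.congr_deriv ?_
    simp only [sub_apply, add_apply, smul_apply, one_smul, sub_neg_eq_add]
  have hbound : ∀ t ∈ Ico (0 : ℝ) 1,
      ‖(fderiv ℝ f (m + t • v) + fderiv ℝ f (m - t • v) - (2 : ℝ) • fderiv ℝ f m) v‖
        ≤ 2 * K * ‖v‖ ^ 3 := by
    intro t ht
    have ht' : |t| ≤ 1 := abs_le.mpr ⟨by linarith [ht.1], ht.2.le⟩
    have hmem_add := hs.add_smul_mem_of_abs_le hadd hsub ht'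
    have hmem_sub := hs.sub_smul_mem_of_abs_le hadd hsub ht'
    calc _ ≤ ‖fderiv ℝ f (m + t • v) + fderiv ℝ f (m - t • v) - (2 : ℝ) • fderiv ℝ f m‖ * ‖v‖ :=
          ContinuousLinearMap.le_opNorm _ v
      _ ≤ 2 * K * ‖t • v‖ ^ 2 * ‖v‖ := by
          gcongr
          exact norm_add_add_sub_two_smul_le hf₂ hs hK hmem_add hmem_sub
      _ = 2 * K * ‖v‖ ^ 3 * |t| ^ 2 := by rw [norm_smul, Real.norm_eq_abs]; ring
      _ ≤ 2 * K * ‖v‖ ^ 3 := mul_le_of_le_one_right (by positivity) (pow_le_one₀ (abs_nonneg t) ht')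
  simpa using norm_image_sub_le_of_norm_deriv_le_segment_01' hderiv hbound

end CentralDifference

theorem inner_nhat (f : EuclideanSpace ℝ (Fin 3) → ℝ) (x v : EuclideanSpace ℝ (Fin 3)) :
    inner ℝ v (nhat f x) = fderiv ℝ f x v / ‖gradient f x‖ := by
  rw [nhat, real_inner_smul_right, real_inner_comm, inner_gradient_left, inv_mul_eq_div]

theorem relative_vector_almost_tangent_general
    (f : EuclideanSpace ℝ (Fin 3) → ℝ) (hf : ContDiff ℝ 3 f)
    (x₀ : EuclideanSpace ℝ (Fin 3)) (hx₀ : gradient f x₀ ≠ 0) :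
    ∃ δ > (0:ℝ), ∃ C > (0:ℝ),
      ∀ z₁ z₂ : EuclideanSpace ℝ (Fin 3),
        z₁ ∈ Metric.ball x₀ δ → z₂ ∈ Metric.ball x₀ δ → f z₁ = 0 → f z₂ = 0 →
          gradient f ((2:ℝ)⁻¹ • (z₁ + z₂)) ≠ 0 ∧
          |(inner ℝ ((2:ℝ)⁻¹ • (z₁ - z₂)) (nhat f ((2:ℝ)⁻¹ • (z₁ + z₂))) : ℝ)|
            ≤ C * ‖(2:ℝ)⁻¹ • (z₁ - z₂)‖ ^ 3 := by
  set g₀ := ‖gradient f x₀‖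
  have hg₀ : 0 < g₀ := norm_pos_iff.mpr hx₀
  obtain ⟨K, U, hU, hK⟩ := (hf.fderiv_right (m := 2) le_rfl |>.fderiv_right (m := 1) le_rfl
    |>.contDiffAt (x := x₀)).exists_lipschitzOnWith
  have hgrad_cont : Continuous (gradient f) :=
    (toDual ℝ _).symm.continuous.comp (hf.continuous_fderiv (by norm_num))
  have hgrad_large : ∀ᶠ x in 𝓝 x₀, g₀ / 2 < ‖gradient f x‖ :=
    hgrad_cont.norm.continuousAt.eventually (lt_mem_nhds (half_lt_self hg₀))
  obtain ⟨δ, hδ, hball⟩ := Metric.mem_nhds_iff.mp (inter_mem hU hgrad_large)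
  refine ⟨δ, hδ, 2 * (K + 1) / g₀, by positivity, fun z₁ z₂ h₁ h₂ hz₁ hz₂ ↦ ?_⟩
  set m : EuclideanSpace ℝ (Fin 3) := (2:ℝ)⁻¹ • (z₁ + z₂)
  set v : EuclideanSpace ℝ (Fin 3) := (2:ℝ)⁻¹ • (z₁ - z₂)
  have hadd : m + v = z₁ := by module
  have hsub : m - v = z₂ := by module
  have hm : m ∈ ball x₀ δ := by
    simpa only [zero_smul, add_zero] using (convex_ball x₀ δ).add_smul_mem_of_abs_le (hadd ▸ h₁) (hsub ▸ h₂)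
      (t := 0) (by simp)
  have hgm : g₀ / 2 < ‖gradient f m‖ := (hball hm).2
  have hcubic := norm_sub_sub_two_smul_fderiv_le (hf.of_le (by norm_num)) (convex_ball x₀ δ)
    (hK.mono (hball.trans inter_subset_left)) (hadd ▸ h₁) (hsub ▸ h₂)
  rw [hadd, hsub, hz₁, hz₂] at hcubic
  have hlinear : |fderiv ℝ f m v| ≤ K * ‖v‖ ^ 3 := by
    rw [sub_self, zero_sub, norm_neg, norm_smul, Real.norm_two, Real.norm_eq_abs] at hcubic
    linarith
  refine ⟨norm_pos_iff.mp (by linarith), ?_⟩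
  rw [inner_nhat, abs_div, abs_norm]
  calc |fderiv ℝ f m v| / ‖gradient f m‖ ≤ K * ‖v‖ ^ 3 / (g₀ / 2) :=
        div_le_div₀ (by positivity) hlinear (by positivity) hgm.le
    _ = 2 * K / g₀ * ‖v‖ ^ 3 := by ring
    _ ≤ 2 * (K + 1) / g₀ * ‖v‖ ^ 3 := by gcongr; exact le_add_of_nonneg_right zero_le_one

/-- The relative vector of two nearby points on a level surface `{f = 0}` is tangent to
the surface at their midpoint up to a cubic error. -/
theorem relative_vector_almost_tangent
    (f : EuclideanSpace ℝ (Fin 3) → ℝ) (hf : ContDiff ℝ 3 f)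
    (x₀ : EuclideanSpace ℝ (Fin 3)) (hx₀0 : f x₀ = 0) (hx₀ : gradient f x₀ ≠ 0) :
    ∃ δ > (0:ℝ), ∃ C > (0:ℝ),
      ∀ z₁ z₂ : EuclideanSpace ℝ (Fin 3),
        z₁ ∈ Metric.ball x₀ δ → z₂ ∈ Metric.ball x₀ δ → f z₁ = 0 → f z₂ = 0 →
          gradient f ((2:ℝ)⁻¹ • (z₁ + z₂)) ≠ 0 ∧
          |(inner ℝ ((2:ℝ)⁻¹ • (z₁ - z₂)) (nhat f ((2:ℝ)⁻¹ • (z₁ + z₂))) : ℝ)|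
            ≤ C * ‖(2:ℝ)⁻¹ • (z₁ - z₂)‖ ^ 3 :=
  relative_vector_almost_tangent_general f hf x₀ hx₀
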